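/- Let γ(x,ξ) = ((|ξ|²(1+|∇η(x)|²) − (∇η(x)·ξ)²)/(1+|∇η(x)|²))^{3/4} for a function η with ∇η ∈ L^∞(ℝ^d). Then there exists an absolute constant C_d > 0 such that, with c₀ = C_d(1 + ‖∇η‖_{L^∞})^{-N} for some N (a positive lower bound depending only on d and ‖∇η‖_{L^∞}), for every fixed annulus C ⊂ ℝ^d∖{0}: inf over (x,ξ) ∈ ℝ^d × C of |det ∂_ξ² γ(x,ξ)| ≥ c₀ > 0. In particular the Hessian in ξ of the symbol γ is nondegenerate on every annulus, uniformly in x. -/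

import Mathlib

open MeasureTheory Real
open scoped FourierTransform RealInnerProductSpace ENNReal

noncomputable section

abbrev Ed (d : ℕ) := EuclideanSpace ℝ (Fin d)

/-- the symbol `γ(x,ξ) = ((|ξ|²(1+|g(x)|²) − (g(x)·ξ)²)/(1+|g(x)|²))^{3/4}`,
where `g = ∇η`. -/
noncomputable def gammaSym {d : ℕ} (g : Ed d → Ed d) (x ξ : Ed d) : ℝ :=
  ((‖ξ‖ ^ 2 * (1 + ‖g x‖ ^ 2) - (⟪g x, ξ⟫ : ℝ) ^ 2) / (1 + ‖g x‖ ^ 2)) ^ ((3:ℝ)/4)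

/-- the Hessian matrix in `ξ` of a real-valued function on `ℝ^d`. -/
noncomputable def hessXi {d : ℕ} (f : Ed d → ℝ) (ξ : Ed d) :
    Matrix (Fin d) (Fin d) ℝ :=
  Matrix.of fun i j =>
    fderiv ℝ (fun ζ => fderiv ℝ f ζ (EuclideanSpace.single i 1)) ξ
      (EuclideanSpace.single j 1)

/-!
Write `v = ∇η(x)`. Then `γ(x, ·) = q ^ (3/4)` for the quadratic form `q(ξ) = ξᵀ G ξ` with
`G = (1 + v vᵀ)⁻¹`. For any symmetric `G` with `q(ξ) > 0`, the Hessian of `q ^ p` is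
`2p q^(p-1) (G + 2(p-1) q⁻¹ (Gξ)(Gξ)ᵀ)`, a rank-one perturbation of `G` along `Gξ`, so the matrix
determinant lemma gives `det = (2p q^(p-1))^d (2p - 1) det G`, because `(Gξ)ᵀ ξ = q`. With `p = 3/4`
and `det G = (1 + |v|²)⁻¹` this is `(3/2 q^(-1/4))^d / (2 (1 + |v|²))`; on the annulus
`q ≤ |ξ|² ≤ R₂²` and `1 + |v|² ≤ (1 + M)²`.
-/

open Matrix WithLp

theorem Matrix.det_add_vecMulVec_mulVec {R n : Type*} [CommRing R] [Fintype n] [DecidableEq n]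
    (G : Matrix n n R) (x w : n → R) :
    (G + vecMulVec (G *ᵥ x) w).det = G.det * (1 + w ⬝ᵥ x) := by
  have : G + vecMulVec (G *ᵥ x) w = G * (1 + vecMulVec x w) := by
    rw [Matrix.mul_add, Matrix.mul_one, mul_vecMulVec]
  rw [this, det_mul, vecMulVec_eq Unit, det_one_add_replicateCol_mul_replicateRow]

theorem EuclideanSpace.real_inner_eq_dotProduct {ι : Type*} [Fintype ι] (x y : EuclideanSpace ℝ ι) :
    ⟪x, y⟫ = ofLp x ⬝ᵥ ofLp y := by
  rw [EuclideanSpace.inner_eq_star_dotProduct, star_trivial, dotProduct_comm]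

section InnerSelf
variable {E : Type*} [NormedAddCommGroup E] [InnerProductSpace ℝ E] {T : E →L[ℝ] E}

theorem hasFDerivAt_inner_self_apply (hT : (T : E →ₗ[ℝ] E).IsSymmetric) (ζ : E) :
    HasFDerivAt (fun ζ => ⟪ζ, T ζ⟫) ((2 : ℝ) • innerSL ℝ (T ζ)) ζ := by
  refine ((hasFDerivAt_id ζ).inner ℝ T.hasFDerivAt).congr_fderiv ?_
  ext h
  have : ⟪ζ, T h⟫ = ⟪T ζ, h⟫ := (hT ζ h).symm
  simp [fderivInnerCLM_apply, this, real_inner_comm h, two_mul]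

theorem fderiv_rpow_inner_self_apply (hT : (T : E →ₗ[ℝ] E).IsSymmetric) (p : ℝ) {ζ : E}
    (hζ : ⟪ζ, T ζ⟫ ≠ 0) (e : E) :
    fderiv ℝ (fun ζ => ⟪ζ, T ζ⟫ ^ p) ζ e = 2 * p * ⟪ζ, T ζ⟫ ^ (p - 1) * ⟪e, T ζ⟫ := by
  rw [((hasFDerivAt_inner_self_apply hT ζ).rpow_const (Or.inl hζ)).fderiv]
  simp only [_root_.smul_apply, innerSL_apply_apply, smul_eq_mul, real_inner_comm e]
  ring

theorem fderiv_fderiv_rpow_inner_self_apply (hT : (T : E →ₗ[ℝ] E).IsSymmetric) (p : ℝ)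
    {ξ : E} (hξ : ⟪ξ, T ξ⟫ ≠ 0) (e e' : E) :
    fderiv ℝ (fun ζ => fderiv ℝ (fun ζ => ⟪ζ, T ζ⟫ ^ p) ζ e) ξ e' =
      2 * p * ⟪ξ, T ξ⟫ ^ (p - 1) * ⟪e, T e'⟫ +
        4 * p * (p - 1) * ⟪ξ, T ξ⟫ ^ (p - 2) * ⟪e, T ξ⟫ * ⟪e', T ξ⟫ := by
  have hfirst : (fun ζ => fderiv ℝ (fun ζ => ⟪ζ, T ζ⟫ ^ p) ζ e) =ᶠ[nhds ξ]
      fun ζ => 2 * p * ⟪ζ, T ζ⟫ ^ (p - 1) * ⟪e, T ζ⟫ := by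
    have hq : Continuous fun ζ => ⟪ζ, T ζ⟫ := by fun_prop
    filter_upwards [hq.continuousAt.eventually_ne hξ] with ζ hζ
    exact fderiv_rpow_inner_self_apply hT p hζ e
  have hsecond : HasFDerivAt (fun ζ => 2 * p * ⟪ζ, T ζ⟫ ^ (p - 1) * ⟪e, T ζ⟫) _ ξ :=
    (((hasFDerivAt_inner_self_apply hT ξ).rpow_const (p := p - 1) (Or.inl hξ)).const_mul
      (2 * p)).mul ((innerSL ℝ e).comp T).hasFDerivAt
  rw [hfirst.fderiv_eq, hsecond.fderiv]
  simp only [rpow_sub_one hξ, sub_sub, one_add_one_eq_two, _root_.add_apply, _root_.smul_apply,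
    ContinuousLinearMap.comp_apply, coe_innerSL_apply, smul_eq_mul, real_inner_comm e']
  ring

end InnerSelf

theorem inner_single_toEuclideanCLM {ι : Type*} [Fintype ι] [DecidableEq ι]
    (G : Matrix ι ι ℝ) (i : ι) (ζ : EuclideanSpace ℝ ι) :
    ⟪EuclideanSpace.single i 1, toEuclideanCLM (𝕜 := ℝ) G ζ⟫ = (G *ᵥ ofLp ζ) i := by
  simp [inner_toEuclideanCLM]

section Hessian
variable {d : ℕ}

theorem hessXi_rpow_inner_self_toEuclideanCLM {G : Matrix (Fin d) (Fin d) ℝ}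
    (hG : G.IsHermitian) (p : ℝ) {ξ : Ed d} (hξ : ⟪ξ, toEuclideanCLM (𝕜 := ℝ) G ξ⟫ ≠ 0) :
    hessXi (fun ζ => ⟪ζ, toEuclideanCLM (𝕜 := ℝ) G ζ⟫ ^ p) ξ =
      (2 * p * ⟪ξ, toEuclideanCLM (𝕜 := ℝ) G ξ⟫ ^ (p - 1)) • G +
        (4 * p * (p - 1) * ⟪ξ, toEuclideanCLM (𝕜 := ℝ) G ξ⟫ ^ (p - 2)) •
          vecMulVec (G *ᵥ ofLp ξ) (G *ᵥ ofLp ξ) := by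
  have hT : ((toEuclideanCLM (𝕜 := ℝ) G : Ed d →L[ℝ] Ed d) : Ed d →ₗ[ℝ] Ed d).IsSymmetric :=
    isSymmetric_toEuclideanLin_iff.mpr hG
  ext i j
  rw [hessXi, of_apply, fderiv_fderiv_rpow_inner_self_apply hT p hξ]
  simp only [inner_single_toEuclideanCLM, PiLp.ofLp_single, mulVec_single, MulOpposite.op_one,
    Pi.smul_apply, col_apply, one_smul, Matrix.add_apply, Matrix.smul_apply, smul_eq_mul,
    vecMulVec_apply]
  ring

theorem det_hessXi_rpow_inner_self_toEuclideanCLM {G : Matrix (Fin d) (Fin d) ℝ}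
    (hG : G.IsHermitian) (p : ℝ) {ξ : Ed d}
    (hξ : 0 < ⟪ξ, toEuclideanCLM (𝕜 := ℝ) G ξ⟫) :
    (hessXi (fun ζ => ⟪ζ, toEuclideanCLM (𝕜 := ℝ) G ζ⟫ ^ p) ξ).det =
      (2 * p * ⟪ξ, toEuclideanCLM (𝕜 := ℝ) G ξ⟫ ^ (p - 1)) ^ d * (2 * p - 1) * G.det := by
  set q := ⟪ξ, toEuclideanCLM (𝕜 := ℝ) G ξ⟫ with hq
  have hq0 : q ≠ 0 := hξ.ne'
  have hb : 4 * p * (p - 1) * q ^ (p - 2) = 2 * p * q ^ (p - 1) * (2 * (p - 1) / q) := by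
    rw [show p - 2 = p - 1 - 1 by ring, rpow_sub_one hξ.ne' (p - 1)]
    field_simp
    ring
  rw [hessXi_rpow_inner_self_toEuclideanCLM hG p hξ.ne', ← hq, hb,
    mul_smul (2 * p * q ^ (p - 1)) (2 * (p - 1) / q), ← vecMulVec_smul,
    ← smul_add, det_smul, Fintype.card_fin, det_add_vecMulVec_mulVec, smul_dotProduct,
    dotProduct_comm, ← inner_toEuclideanCLM, ← hq, smul_eq_mul, div_mul_cancel₀ _ hq0]
  ring

end Hessian

section GraphCometric
variable {d : ℕ}

-- Sherman–Morrison form of `(1 + v vᵀ)⁻¹`; for `v = ∇η(x)`, `1 + v vᵀ` is the metric of the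
-- graph of `η`.
def graphCometric (v : Ed d) : Matrix (Fin d) (Fin d) ℝ :=
  1 - (1 + ‖v‖ ^ 2)⁻¹ • vecMulVec (ofLp v) (ofLp v)

theorem graphCometric_isHermitian (v : Ed d) : (graphCometric v).IsHermitian := by
  simp [graphCometric, IsHermitian]

theorem det_graphCometric (v : Ed d) : (graphCometric v).det = (1 + ‖v‖ ^ 2)⁻¹ := by
  have hs : 1 + ‖v‖ ^ 2 ≠ 0 := by positivity
  have : graphCometric v = 1 + vecMulVec (1 *ᵥ ofLp v) (-(1 + ‖v‖ ^ 2)⁻¹ • ofLp v) := by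
    rw [one_mulVec, vecMulVec_smul, neg_smul, ← sub_eq_add_neg, graphCometric]
  rw [this, det_add_vecMulVec_mulVec, det_one, neg_smul, neg_dotProduct, smul_dotProduct,
    ← EuclideanSpace.real_inner_eq_dotProduct, real_inner_self_eq_norm_sq, smul_eq_mul]
  field_simp
  ring

theorem inner_self_graphCometric (v ζ : Ed d) :
    ⟪ζ, toEuclideanCLM (𝕜 := ℝ) (graphCometric v) ζ⟫ = ‖ζ‖ ^ 2 - ⟪v, ζ⟫ ^ 2 / (1 + ‖v‖ ^ 2) := by
  rw [inner_toEuclideanCLM, graphCometric, sub_mulVec, one_mulVec, smul_mulVec, vecMulVec_mulVec,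
    dotProduct_sub, dotProduct_smul, op_smul_eq_smul, dotProduct_smul, smul_eq_mul, smul_eq_mul,
    ← EuclideanSpace.real_inner_eq_dotProduct, ← EuclideanSpace.real_inner_eq_dotProduct,
    ← EuclideanSpace.real_inner_eq_dotProduct, real_inner_self_eq_norm_sq, real_inner_comm ζ v]
  ring

end GraphCometric

section GammaSym
variable {d : ℕ}

theorem gammaSym_eq_rpow_inner_self_graphCometric (g : Ed d → Ed d) (x : Ed d) :
    gammaSym g x =
      fun ζ => ⟪ζ, toEuclideanCLM (𝕜 := ℝ) (graphCometric (g x)) ζ⟫ ^ ((3 : ℝ) / 4) := by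
  funext ζ
  rw [gammaSym, inner_self_graphCometric]
  congr 1
  field_simp

theorem inner_self_graphCometric_pos (v : Ed d) {ζ : Ed d} (hζ : ζ ≠ 0) :
    0 < ‖ζ‖ ^ 2 - ⟪v, ζ⟫ ^ 2 / (1 + ‖v‖ ^ 2) := by
  have hcs : ⟪v, ζ⟫ ^ 2 ≤ ‖v‖ ^ 2 * ‖ζ‖ ^ 2 := by
    rw [← mul_pow, ← sq_abs]
    exact pow_le_pow_left₀ (abs_nonneg _) (abs_real_inner_le_norm v ζ) 2
  have hζ' : 0 < ‖ζ‖ ^ 2 := by positivity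
  rw [sub_pos, div_lt_iff₀ (by positivity)]
  nlinarith

theorem inner_self_graphCometric_le (v ζ : Ed d) :
    ‖ζ‖ ^ 2 - ⟪v, ζ⟫ ^ 2 / (1 + ‖v‖ ^ 2) ≤ ‖ζ‖ ^ 2 := by
  have : 0 ≤ ⟪v, ζ⟫ ^ 2 / (1 + ‖v‖ ^ 2) := by positivity
  linarith

theorem det_hessXi_gammaSym (g : Ed d → Ed d) (x : Ed d) {ξ : Ed d} (hξ : ξ ≠ 0) :
    (hessXi (gammaSym g x) ξ).det =
      (3 / 2 * (‖ξ‖ ^ 2 - ⟪g x, ξ⟫ ^ 2 / (1 + ‖g x‖ ^ 2)) ^ (-(1 / 4) : ℝ)) ^ d /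
        (2 * (1 + ‖g x‖ ^ 2)) := by
  have hq := inner_self_graphCometric_pos (g x) hξ
  rw [← inner_self_graphCometric] at hq ⊢
  rw [gammaSym_eq_rpow_inner_self_graphCometric,
    det_hessXi_rpow_inner_self_toEuclideanCLM (graphCometric_isHermitian _) _ hq,
    det_graphCometric]
  rw [show (3 : ℝ) / 4 - 1 = -(1 / 4) by norm_num]
  field_simp
  ring

end GammaSym

theorem stmt6_general (d : ℕ) (R₁ R₂ : ℝ) (hR₁ : 0 < R₁) (hR₂ : R₁ ≤ R₂) :
    ∃ (C : ℝ) (N : ℕ), 0 < C ∧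
      ∀ (η : Ed d → ℝ) (M : ℝ), 0 ≤ M →
        (∀ x : Ed d, ‖gradient η x‖ ≤ M) →
        ∀ (x ξ : Ed d), R₁ ≤ ‖ξ‖ → ‖ξ‖ ≤ R₂ →
          C * (1 + M) ^ (-(N : ℝ)) ≤
            |(hessXi (fun ζ => gammaSym (fun y => gradient η y) x ζ) ξ).det| := by
  have hR₂pos : 0 < R₂ := hR₁.trans_le hR₂
  refine ⟨(3 / 2 * (R₂ ^ 2) ^ (-(1 / 4) : ℝ)) ^ d / 2, 2, by positivity, ?_⟩
  intro η M hM hgrad x ξ hξR₁ hξR₂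
  have hξ : ξ ≠ 0 := norm_pos_iff.mp (hR₁.trans_le hξR₁)
  have hq := inner_self_graphCometric_pos (gradient η x) hξ
  have hqR₂ : ‖ξ‖ ^ 2 - ⟪gradient η x, ξ⟫ ^ 2 / (1 + ‖gradient η x‖ ^ 2) ≤ R₂ ^ 2 :=
    (inner_self_graphCometric_le _ _).trans (by gcongr)
  have hgM : 1 + ‖gradient η x‖ ^ 2 ≤ (1 + M) ^ 2 := by
    nlinarith [hgrad x, norm_nonneg (gradient η x)]
  rw [det_hessXi_gammaSym _ _ hξ, abs_of_pos (by positivity),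
    rpow_neg (by positivity : (0 : ℝ) ≤ 1 + M), rpow_natCast]
  calc _ = (3 / 2 * (R₂ ^ 2) ^ (-(1 / 4) : ℝ)) ^ d / (2 * (1 + M) ^ 2) := by field_simp
    _ ≤ _ := by
      gcongr (3 / 2 * ?_) ^ _ / (2 * ?_)
      exact rpow_le_rpow_of_nonpos hq hqR₂ (by norm_num)

/-- uniform nondegeneracy of the Hessian `∂_ξ² γ` on any fixed
annulus: `|det ∂_ξ² γ(x,ξ)| ≥ C_d (1+‖∇η‖_{L^∞})^{-N} > 0`. -/
theorem stmt6 (d : ℕ) (hd : 0 < d) (R₁ R₂ : ℝ) (hR₁ : 0 < R₁) (hR₂ : R₁ ≤ R₂) :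
    ∃ (C : ℝ) (N : ℕ), 0 < C ∧
      ∀ (η : Ed d → ℝ) (M : ℝ), 0 ≤ M →
        (∀ x : Ed d, ‖gradient η x‖ ≤ M) →
        ∀ (x ξ : Ed d), R₁ ≤ ‖ξ‖ → ‖ξ‖ ≤ R₂ →
          C * (1 + M) ^ (-(N : ℝ)) ≤
            |(hessXi (fun ζ => gammaSym (fun y => gradient η y) x ζ) ξ).det| :=
  stmt6_general d R₁ R₂ hR₁ hR₂
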